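/- For α ∈ {2, 3, 4} define the digitally-shift-invariant kernel K̈_α(x, y) := ω_α(x ⊕ y) for x, y ∈ [0,1). Then for every dyadic rational x ∈ [0,1), lim_{h → 0⁺} (K̈_α(x, x) − K̈_α(x + h, x)) / h² = +∞; equivalently, since (x + h) ⊕ x = h for sufficiently small h > 0, lim_{h → 0⁺} (ω_α(0) − ω_α(h)) / h² = +∞. -/

import Mathlib

/-! For `α ≥ 2` the coefficients `2^{-μ_α(k)}` are summable (for `α = 2` the block
`2^a ≤ k < 2^{a+1}` contributes `2^{-(a+1)} (1 + a/2)`), so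
`ω_α(0) - ω_α(h) = ∑_k 2^{-μ_α(k)} (1 - wal_k(h))` is a series of nonnegative terms.
Keeping only the terms `k = 2^n`, for which `μ_α(2^n) = n + 1` and `1 - wal_{2^n}(h) = 2 h_{n+1}`,
leaves the binary expansion of `2h`; hence `(ω_α(0) - ω_α(h)) / h² ≥ 2 / h`.
For a dyadic `x = j / 2^m` and `0 ≤ h < 2^{-m}` the first `m` digits of `x + h` are those of `x`
and the later ones those of `h`, so `(x + h) ⊕ x = h`. -/

noncomputable def binDigit (ℓ : ℕ) (x : ℝ) : ℕ := (⌊(2 : ℝ) ^ ℓ * x⌋).toNat % 2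

noncomputable def walsh (k : ℕ) (x : ℝ) : ℝ :=
  (-1 : ℝ) ^ (∑ ℓ ∈ Finset.range (k + 1), (k / 2 ^ ℓ % 2) * binDigit (ℓ + 1) x)

def dickWeight (α k : ℕ) : ℕ :=
  (((((Finset.range (k + 1)).filter fun i => k / 2 ^ i % 2 = 1).sort (· ≤ ·)).reverse.take
        α).map (· + 1)).sum

noncomputable def omegaDick (α : ℕ) (x : ℝ) : ℝ :=
  ∑' k : ℕ, (2 : ℝ) ^ (-(dickWeight α (k + 1) : ℤ)) * walsh (k + 1) x

noncomputable def xorBin (x y : ℝ) : ℝ :=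
  ∑' ℓ : ℕ,
    (((binDigit (ℓ + 1) x + binDigit (ℓ + 1) y) % 2 : ℕ) : ℝ) * (2 : ℝ) ^ (-((ℓ : ℤ) + 1))

open Filter Topology Finset

lemma dickWeight_eq_bitIndices (α k : ℕ) :
    dickWeight α k = ((k.bitIndices.reverse.take α).map (· + 1)).sum := by
  have hbits : ((range (k + 1)).filter fun i => k / 2 ^ i % 2 = 1) = k.bitIndices.toFinset := by
    ext i
    simp only [mem_filter, mem_range, List.mem_toFinset, Nat.mem_bitIndices,
      Nat.testBit_eq_decide_div_mod_eq, decide_eq_true_eq]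
    refine ⟨And.right, fun hi => ⟨?_, hi⟩⟩
    have := Nat.ge_two_pow_of_testBit (Nat.testBit_eq_decide_div_mod_eq ▸ decide_eq_true hi)
    have := @Nat.lt_two_pow_self i
    omega
  rw [dickWeight, hbits, (List.toFinset_sort _ Nat.bitIndices_nodup).2
    (Nat.bitIndices_sorted.pairwise.imp le_of_lt)]

lemma bitIndices_two_pow_add {a r : ℕ} (hr : r < 2 ^ a) :
    (2 ^ a + r).bitIndices = r.bitIndices ++ [a] := by
  have hsorted : (r.bitIndices ++ [a]).SortedLT := by
    refine List.sortedLT_iff_pairwise.2 (List.pairwise_append.2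
      ⟨Nat.bitIndices_sorted.pairwise, List.pairwise_singleton _ a, ?_⟩)
    intro i hi b hb
    rw [List.mem_singleton.1 hb]
    exact (Nat.pow_lt_pow_iff_right (by norm_num)).1
      ((Nat.two_pow_le_of_mem_bitIndices hi).trans_lt hr)
  simpa [add_comm] using Nat.bitIndices_sum_map_two_pow hsorted

lemma dickWeight_two_pow_add (α : ℕ) {a r : ℕ} (hr : r < 2 ^ a) :
    dickWeight (α + 1) (2 ^ a + r) = a + 1 + dickWeight α r := by
  simp [dickWeight_eq_bitIndices, bitIndices_two_pow_add hr]

lemma dickWeight_two_pow (α n : ℕ) : dickWeight (α + 1) (2 ^ n) = n + 1 := by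
  simp [dickWeight_eq_bitIndices]

lemma dickWeight_zero_left (k : ℕ) : dickWeight 0 k = 0 := by
  simp [dickWeight]

lemma dickWeight_mono_left (k : ℕ) : Monotone fun α => dickWeight α k := by
  intro α β hαβ
  simp only [dickWeight_eq_bitIndices]
  exact List.Sublist.sum_le_sum ((List.take_prefix_take_left hαβ).sublist.map _)
    (fun _ _ => Nat.zero_le _)

noncomputable def dickCoeff (α k : ℕ) : ℝ := 2⁻¹ ^ dickWeight α k

lemma dickCoeff_nonneg (α k : ℕ) : 0 ≤ dickCoeff α k := by
  unfold dickCoeff; positivity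

lemma omegaDick_eq_tsum (α : ℕ) (x : ℝ) :
    omegaDick α x = ∑' k, dickCoeff α (k + 1) * walsh (k + 1) x := by
  simp [omegaDick, dickCoeff, zpow_neg, inv_pow]

lemma sum_range_two_pow_succ_dickCoeff (α A : ℕ) :
    ∑ k ∈ range (2 ^ (A + 1)), dickCoeff (α + 1) k
      = ∑ k ∈ range (2 ^ A), dickCoeff (α + 1) k
        + 2⁻¹ ^ (A + 1) * ∑ r ∈ range (2 ^ A), dickCoeff α r := by
  rw [pow_succ, mul_two, sum_range_add, mul_sum]
  congr 1
  refine sum_congr rfl fun r hr => ?_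
  rw [dickCoeff, dickWeight_two_pow_add α (mem_range.1 hr), pow_add, dickCoeff]

lemma sum_range_two_pow_dickCoeff_one (A : ℕ) :
    ∑ r ∈ range (2 ^ A), dickCoeff 1 r = 1 + A / 2 := by
  induction A with
  | zero => simp [dickCoeff, dickWeight_eq_bitIndices]
  | succ A ih =>
    rw [sum_range_two_pow_succ_dickCoeff, ih]
    simp only [dickCoeff, dickWeight_zero_left, pow_zero, sum_const, card_range, nsmul_eq_mul]
    rw [inv_pow]
    push_cast
    field_simp
    ring

lemma sum_range_two_pow_dickCoeff_two (A : ℕ) :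
    ∑ k ∈ range (2 ^ A), dickCoeff 2 k = 5 / 2 - (A + 3) / 2 ^ (A + 1) := by
  induction A with
  | zero => norm_num [dickCoeff, dickWeight_eq_bitIndices]
  | succ A ih =>
    rw [sum_range_two_pow_succ_dickCoeff, ih, sum_range_two_pow_dickCoeff_one, inv_pow]
    push_cast
    field_simp
    ring

lemma summable_dickCoeff {α : ℕ} (hα : 2 ≤ α) : Summable (dickCoeff α) := by
  refine summable_of_sum_range_le (c := 5 / 2) (dickCoeff_nonneg α) fun n => ?_
  calc ∑ k ∈ range n, dickCoeff α k
      ≤ ∑ k ∈ range n, dickCoeff 2 k := sum_le_sum fun k _ =>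
        pow_le_pow_of_le_one (by norm_num) (by norm_num) (dickWeight_mono_left k hα)
    _ ≤ ∑ k ∈ range (2 ^ n), dickCoeff 2 k :=
        sum_le_sum_of_subset_of_nonneg (range_subset_range.2 Nat.lt_two_pow_self.le)
          fun k _ _ => dickCoeff_nonneg 2 k
    _ ≤ 5 / 2 := by
        rw [sum_range_two_pow_dickCoeff_two]
        have : (0 : ℝ) ≤ (n + 3) / 2 ^ (n + 1) := by positivity
        linarith

lemma binDigit_eq_floor_mod (ℓ : ℕ) (x : ℝ) : binDigit ℓ x = ⌊2 ^ ℓ * x⌋₊ % 2 := by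
  rw [binDigit, Int.floor_toNat]

lemma binDigit_lt_two (ℓ : ℕ) (x : ℝ) : binDigit ℓ x < 2 :=
  Nat.mod_lt _ two_pos

lemma binDigit_zero_right (ℓ : ℕ) : binDigit ℓ 0 = 0 := by
  simp [binDigit]

lemma walsh_zero_left (x : ℝ) : walsh 0 x = 1 := by
  simp [walsh]

lemma walsh_zero_right (k : ℕ) : walsh k 0 = 1 := by
  simp [walsh, binDigit_zero_right]

lemma abs_walsh (k : ℕ) (x : ℝ) : |walsh k x| = 1 := by
  simp [walsh]

lemma walsh_two_pow (n : ℕ) (x : ℝ) : walsh (2 ^ n) x = (-1) ^ binDigit (n + 1) x := by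
  rw [walsh, sum_eq_single_of_mem n (mem_range.2 (Nat.lt_two_pow_self.trans (Nat.lt_succ_self _)))]
  · simp
  · intro ℓ _ hℓn
    rcases hℓn.lt_or_gt with hlt | hgt
    · rw [Nat.pow_div hlt.le two_pos, ← Nat.sub_add_cancel (Nat.sub_pos_of_lt hlt), pow_succ,
        Nat.mul_mod_left, zero_mul]
    · rw [Nat.div_eq_of_lt (Nat.pow_lt_pow_right one_lt_two hgt), Nat.zero_mod, zero_mul]

lemma floor_two_pow_succ_mul (n : ℕ) (y : ℝ) :
    ⌊2 ^ (n + 1) * y⌋₊ = 2 * ⌊2 ^ n * y⌋₊ + binDigit (n + 1) y := by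
  have hhalf : ⌊2 ^ n * y⌋₊ = ⌊2 ^ (n + 1) * y⌋₊ / 2 := by
    rw [← Nat.floor_div_ofNat, pow_succ]
    ring_nf
  rw [hhalf, binDigit_eq_floor_mod, Nat.div_add_mod]

lemma sum_range_binDigit {y : ℝ} (hy1 : y < 1) (n : ℕ) :
    ∑ ℓ ∈ range n, (binDigit (ℓ + 1) y : ℝ) * 2⁻¹ ^ (ℓ + 1) = ⌊2 ^ n * y⌋₊ / 2 ^ n := by
  induction n with
  | zero => simp [Nat.floor_eq_zero.2 hy1]
  | succ n ih =>
    rw [sum_range_succ, ih, floor_two_pow_succ_mul, inv_pow]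
    push_cast
    field_simp
    ring

lemma hasSum_binDigit {y : ℝ} (hy0 : 0 ≤ y) (hy1 : y < 1) :
    HasSum (fun ℓ : ℕ => (binDigit (ℓ + 1) y : ℝ) * 2⁻¹ ^ (ℓ + 1)) y := by
  rw [hasSum_iff_tendsto_nat_of_nonneg (fun ℓ => by positivity)]
  simp only [sum_range_binDigit hy1, mul_comm _ y]
  exact (tendsto_nat_floor_mul_div_atTop hy0).comp
    (tendsto_pow_atTop_atTop_of_one_lt one_lt_two)

lemma binDigit_eq_of_floor_two_pow_mul_eq {ℓ m : ℕ} (hℓ : ℓ ≤ m) {a b : ℝ}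
    (hab : ⌊2 ^ m * a⌋₊ = ⌊2 ^ m * b⌋₊) : binDigit ℓ a = binDigit ℓ b := by
  obtain ⟨d, rfl⟩ := Nat.exists_eq_add_of_le hℓ
  have hfloor (c : ℝ) : ⌊2 ^ ℓ * c⌋₊ = ⌊2 ^ (ℓ + d) * c⌋₊ / 2 ^ d := by
    rw [← Nat.floor_div_natCast, Nat.cast_pow, Nat.cast_ofNat, pow_add]
    field_simp
  rw [binDigit_eq_floor_mod, binDigit_eq_floor_mod, hfloor, hfloor, hab]

lemma binDigit_dyadic_add {ℓ m : ℕ} (j : ℕ) (hℓ : m < ℓ) {h : ℝ} (h0 : 0 ≤ h) :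
    binDigit ℓ (j / 2 ^ m + h) = binDigit ℓ h := by
  obtain ⟨d, rfl⟩ := Nat.exists_eq_add_of_lt hℓ
  have hsplit : (2 : ℝ) ^ (m + d + 1) * (j / 2 ^ m + h)
      = 2 ^ (m + d + 1) * h + (2 * (j * 2 ^ d) : ℕ) := by
    push_cast
    rw [pow_add, pow_add]
    field_simp
    ring
  rw [binDigit_eq_floor_mod, binDigit_eq_floor_mod, hsplit, Nat.floor_add_natCast (by positivity),
    Nat.add_mul_mod_self_left]

lemma xorBin_self (x : ℝ) : xorBin x x = 0 := by
  simp [xorBin, ← two_mul]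

lemma xorBin_dyadic_add_self (j m : ℕ) {h : ℝ} (h0 : 0 ≤ h) (hm : h < 2⁻¹ ^ m) :
    xorBin (j / 2 ^ m + h) (j / 2 ^ m) = h := by
  have hsmall : ⌊2 ^ m * h⌋₊ = 0 := by
    rw [Nat.floor_eq_zero, ← lt_inv_mul_iff₀ (by positivity), ← inv_pow, mul_one]
    exact hm
  have hlead : ⌊(2 : ℝ) ^ m * (j / 2 ^ m + h)⌋₊ = ⌊(2 : ℝ) ^ m * (j / 2 ^ m)⌋₊ := by
    rw [mul_add, mul_div_cancel₀ _ (by positivity), add_comm, Nat.floor_add_natCast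
      (by positivity), hsmall, zero_add, Nat.floor_natCast]
  have hdigit (ℓ : ℕ) :
      (binDigit ℓ (j / 2 ^ m + h) + binDigit ℓ (j / 2 ^ m)) % 2 = binDigit ℓ h := by
    rcases le_or_gt ℓ m with hℓ | hℓ
    · rw [binDigit_eq_of_floor_two_pow_mul_eq hℓ hlead,
        binDigit_eq_of_floor_two_pow_mul_eq hℓ (a := h) (b := 0) (by simpa using hsmall),
        binDigit_zero_right, ← two_mul, Nat.mul_mod_right]
    · have hx := binDigit_dyadic_add j hℓ le_rfl
      rw [add_zero, binDigit_zero_right] at hx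
      rw [binDigit_dyadic_add j hℓ h0, hx, add_zero, Nat.mod_eq_of_lt (binDigit_lt_two ℓ h)]
  have hpow (ℓ : ℕ) : (2 : ℝ) ^ (-((ℓ : ℤ) + 1)) = 2⁻¹ ^ (ℓ + 1) := by
    rw [zpow_neg, inv_pow, ← zpow_natCast]
    push_cast
    rfl
  simp only [xorBin, hdigit, hpow]
  exact (hasSum_binDigit h0 (hm.trans_le (pow_le_one₀ (by norm_num) (by norm_num)))).tsum_eq

lemma two_mul_le_omegaDick_zero_sub {α : ℕ} (hα : 2 ≤ α) {h : ℝ} (h0 : 0 ≤ h) (h1 : h < 1) :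
    2 * h ≤ omegaDick α 0 - omegaDick α h := by
  set g : ℕ → ℝ := fun k => dickCoeff α k * (1 - walsh k h) with hg
  have hg_nonneg (k : ℕ) : 0 ≤ g k :=
    mul_nonneg (dickCoeff_nonneg α k) (sub_nonneg.2 (le_of_abs_le (abs_walsh k h).le))
  have hg_summable : Summable g := by
    refine ((summable_dickCoeff hα).mul_left 2).of_nonneg_of_le hg_nonneg fun k => ?_
    have := neg_le_of_abs_le (abs_walsh k h).le
    nlinarith [dickCoeff_nonneg α k]
  have hdiff : omegaDick α 0 - omegaDick α h = ∑' k, g k := by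
    have hc := (summable_nat_add_iff 1).2 (summable_dickCoeff hα)
    have hw : Summable fun k => dickCoeff α (k + 1) * walsh (k + 1) h :=
      hc.of_norm_bounded fun k => by simp [abs_walsh, abs_of_nonneg (dickCoeff_nonneg α _)]
    rw [hg_summable.tsum_eq_zero_add, omegaDick_eq_tsum, omegaDick_eq_tsum]
    simp only [hg, walsh_zero_left, walsh_zero_right, sub_self, mul_one, zero_add, mul_sub]
    exact (hc.tsum_sub hw).symm
  have hterm (n : ℕ) : g (2 ^ n) = 2 * ((binDigit (n + 1) h : ℝ) * 2⁻¹ ^ (n + 1)) := by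
    obtain ⟨β, rfl⟩ : ∃ β, α = β + 1 := ⟨α - 1, by omega⟩
    simp only [hg, dickCoeff, walsh_two_pow, dickWeight_two_pow]
    have hd := binDigit_lt_two (n + 1) h
    interval_cases binDigit (n + 1) h <;> norm_num
    ring
  have hpow : HasSum (fun n => g (2 ^ n)) (2 * h) := by
    simpa only [hterm] using (hasSum_binDigit h0 h1).mul_left 2
  rw [hdiff, ← hpow.tsum_eq]
  exact tsum_comp_le_tsum_of_inj hg_summable hg_nonneg (Nat.pow_right_injective le_rfl)

lemma tendsto_omegaDick_zero_sub_div_sq {α : ℕ} (hα : 2 ≤ α) :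
    Tendsto (fun h : ℝ => (omegaDick α 0 - omegaDick α h) / h ^ 2) (𝓝[>] 0) atTop := by
  refine tendsto_atTop_mono' _ ?_ (tendsto_inv_nhdsGT_zero.const_mul_atTop two_pos)
  filter_upwards [Ioo_mem_nhdsGT one_pos] with h ⟨h0, h1⟩
  calc 2 * h⁻¹ = 2 * h / h ^ 2 := by field_simp
    _ ≤ _ := by gcongr; exact two_mul_le_omegaDick_zero_sub hα h0.le h1

theorem stmt_14_general (α : ℕ) (hα : α = 2 ∨ α = 3 ∨ α = 4) (x : ℝ)
    (hdy : ∃ j mm : ℕ, x = (j : ℝ) / 2 ^ mm) :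
    Filter.Tendsto
      (fun h : ℝ => (omegaDick α (xorBin x x) - omegaDick α (xorBin (x + h) x)) / h ^ 2)
      (nhdsWithin 0 (Set.Ioi 0)) Filter.atTop ∧
    Filter.Tendsto (fun h : ℝ => (omegaDick α 0 - omegaDick α h) / h ^ 2)
      (nhdsWithin 0 (Set.Ioi 0)) Filter.atTop := by
  obtain ⟨j, m, rfl⟩ := hdy
  have hlim := tendsto_omegaDick_zero_sub_div_sq (α := α) (by omega)
  refine ⟨hlim.congr' ?_, hlim⟩
  filter_upwards [Ioo_mem_nhdsGT (by positivity : (0 : ℝ) < 2⁻¹ ^ m)] with h ⟨h0, hm⟩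
  rw [xorBin_self, xorBin_dyadic_add_self j m h0.le hm]

theorem stmt_14 (α : ℕ) (hα : α = 2 ∨ α = 3 ∨ α = 4) (x : ℝ)
    (hx : x ∈ Set.Ico (0 : ℝ) 1) (hdy : ∃ j mm : ℕ, x = (j : ℝ) / 2 ^ mm) :
    Filter.Tendsto
      (fun h : ℝ => (omegaDick α (xorBin x x) - omegaDick α (xorBin (x + h) x)) / h ^ 2)
      (nhdsWithin 0 (Set.Ioi 0)) Filter.atTop ∧
    Filter.Tendsto (fun h : ℝ => (omegaDick α 0 - omegaDick α h) / h ^ 2)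
      (nhdsWithin 0 (Set.Ioi 0)) Filter.atTop :=
  stmt_14_general α hα x hdy
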